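/- arXiv:2407.02334 — 2 statements merged into one kernel-verified Lean document; each statement's English description precedes it below -/
import Mathlib

section
/- Let ω : (ℝᵐ)ⁿ → ℝ be an alternating n-linear map with n ≥ 2, and let M₀, R : ℝⁿ → ℝᵐ be linear maps with R of rank at most one. Then the function β : ℝ → ℝ defined by β(λ) = ω((M₀ + λR)e₁, …, (M₀ + λR)eₙ) is affine, i.e. there exist real numbers a, b such that β(λ) = a + b·λ for every λ ∈ ℝ. -/
noncomputable section
open MeasureTheory Real Set Filter

/-- `ℝⁿ` with the Euclidean norm. -/
abbrev Euc (n : ℕ) : Type := EuclideanSpace ℝ (Fin n)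

/-- The `i`-th standard basis vector of `ℝⁿ`. -/
def stdVec (n : ℕ) (i : Fin n) : Euc n := EuclideanSpace.single i 1

/-- A linear map has rank at most one: its image lies in the span of a single vector. -/
def RankAtMostOne {n m : ℕ} (R : Euc n →L[ℝ] Euc m) : Prop :=
  ∃ u : Euc m, ∀ x : Euc n, ∃ c : ℝ, R x = c • u

/-!
Every column of `M₀ + λR` is `M₀ eᵢ + λ cᵢ u` for one fixed vector `u`. Expanding `ω`
multilinearly, each term with `u` in two or more slots vanishes because `ω` is alternating,
so only the term `ω(M₀ e₁, …, M₀ eₙ)` and the `n` terms linear in `λ` survive.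
-/

namespace AlternatingMap

variable {R M N ι : Type*} [Semiring R] [AddCommGroup M] [Module R M]
  [AddCommGroup N] [Module R N]

theorem map_eq_zero_of_eq_smul_of_eq_smul (ω : M [⋀^ι]→ₗ[R] N) [DecidableEq ι]
    {v : ι → M} {i j : ι} (hij : i ≠ j) {u : M} {a b : R}
    (hi : v i = a • u) (hj : v j = b • u) : ω v = 0 := by
  have hv : v = Function.update (Function.update v i (a • u)) j (b • u) := by
    rw [← hi, Function.update_eq_self, ← hj, Function.update_eq_self]
  rw [hv, map_update_smul, Function.update_comm hij, map_update_smul,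
    map_update_update _ _ hij.symm, smul_zero, smul_zero]

theorem map_add_smul_eq_add_sum_smul_update [DecidableEq ι] [Fintype ι] (ω : M [⋀^ι]→ₗ[R] N)
    (f : ι → M) (g : ι → R) (u : M) :
    ω (fun i => f i + g i • u) = ω f + ∑ i, g i • ω (Function.update f i u) := by
  have hsecond : ∀ s : Finset ι, 2 ≤ s.card →
      ω (s.piecewise (fun i => g i • u) f) = 0 := by
    intro s hs
    obtain ⟨i, hi, j, hj, hij⟩ := Finset.one_lt_card.mp hs
    exact ω.map_eq_zero_of_eq_smul_of_eq_smul hij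
      (Finset.piecewise_eq_of_mem _ _ _ hi) (Finset.piecewise_eq_of_mem _ _ _ hj)
  calc ω (fun i => f i + g i • u)
      = ω.toMultilinearMap (f + fun i => g i • u) := rfl
    _ = ω f + ω.toMultilinearMap.linearDeriv f (fun i => g i • u)
          + ∑ s : Finset ι with 2 ≤ s.card, ω (s.piecewise (fun i => g i • u) f) :=
      ω.toMultilinearMap.map_add_eq_map_add_linearDeriv_add f _
    _ = ω f + ∑ i, g i • ω (Function.update f i u) := by
      rw [Finset.sum_eq_zero fun s hs => hsecond s (Finset.mem_filter.mp hs).2, add_zero,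
        MultilinearMap.linearDeriv_apply]
      simp only [coe_multilinearMap, map_update_smul]

end AlternatingMap

theorem alternating_eval_rank_one_perturbation_affine_general
    (m n : ℕ)
    (ω : AlternatingMap ℝ (Euc m) ℝ (Fin n))
    (M₀ R : Euc n →L[ℝ] Euc m) (hR : RankAtMostOne R) :
    ∃ a b : ℝ, ∀ lam : ℝ,
      ω (fun i => (M₀ + lam • R) (stdVec n i)) = a + b * lam := by
  obtain ⟨u, hu⟩ := hR
  choose c hc using fun i => hu (stdVec n i)
  set f : Fin n → Euc m := fun i => M₀ (stdVec n i)
  refine ⟨ω f, ∑ i, c i * ω (Function.update f i u), fun lam => ?_⟩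
  have hcolumns : (fun i => (M₀ + lam • R) (stdVec n i)) = fun i => f i + (lam * c i) • u := by
    funext i
    simp only [add_apply, smul_apply, hc i, smul_smul, f]
  rw [hcolumns, ω.map_add_smul_eq_add_sum_smul_update, Finset.sum_mul]
  simp only [smul_eq_mul, mul_assoc, mul_comm lam]

/-- Evaluating an alternating form along a rank-one perturbation line is affine. -/
theorem alternating_eval_rank_one_perturbation_affine
    (m n : ℕ) (hn : 2 ≤ n)
    (ω : AlternatingMap ℝ (Euc m) ℝ (Fin n))
    (M₀ R : Euc n →L[ℝ] Euc m) (hR : RankAtMostOne R) :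
    ∃ a b : ℝ, ∀ lam : ℝ,
      ω (fun i => (M₀ + lam • R) (stdVec n i)) = a + b * lam :=
  alternating_eval_rank_one_perturbation_affine_general m n ω M₀ R hR
end
end

section
/- Let ω : (ℝᵐ)ⁿ → ℝ be an alternating n-linear map with n ≥ 2 whose comass is at most 1 (i.e. ω(v₁,…,vₙ) ≤ 1 for every orthonormal tuple), and let M₀, M₁ : ℝⁿ → ℝᵐ be linear maps such that M₁ − M₀ has rank at most one. Then for every λ ∈ [0,1], |ω(M₁e₁,…,M₁eₙ) − ω(M₀e₁,…,M₀eₙ)| ≤ n·‖M₁ − M₀‖·‖(1−λ)M₀ + λM₁‖^{n−1}, where ‖·‖ is the operator norm. -/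
/-!
Put `M = (1 - λ) M₀ + λ M₁` and `(M₁ - M₀) eᵢ = cᵢ u`. Expanding `ω` multilinearly around the
columns `aᵢ = M eᵢ`, every term with `u` in two slots vanishes, so
`ω(M₁e) - ω(M₀e) = ∑ᵢ ω(a₁, …, (M₁ - M₀) eᵢ, …, aₙ)`. Each term is at most
`‖M₁ - M₀‖ ‖M‖ⁿ⁻¹` by Hadamard's inequality `|ω v| ≤ ∏ ‖vᵢ‖` for forms of comass at most one.
-/

noncomputable section
open MeasureTheory Real Set Filter

open Function

theorem prod_norm_update_le {E ι : Type*} [SeminormedAddCommGroup E] [Fintype ι]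
    [DecidableEq ι] {a : ι → E} {A : ℝ} (ha : ∀ j, ‖a j‖ ≤ A) (i : ι) (x : E) :
    ∏ j, ‖update a i x j‖ ≤ ‖x‖ * A ^ (Fintype.card ι - 1) := by
  calc ∏ j, ‖update a i x j‖ = ‖x‖ * ∏ j ∈ Finset.univ.erase i, ‖a j‖ := by
        rw [← Finset.mul_prod_erase _ _ (Finset.mem_univ i), update_self]
        exact congrArg _ (Finset.prod_congr rfl fun j hj => by
          rw [update_of_ne (Finset.ne_of_mem_erase hj)])
    _ ≤ ‖x‖ * ∏ _j ∈ Finset.univ.erase i, A := by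
        gcongr with j
        exact ha j
    _ = ‖x‖ * A ^ (Fintype.card ι - 1) := by
        rw [Finset.prod_const, Finset.card_erase_of_mem (Finset.mem_univ i), Finset.card_univ]

theorem norm_apply_stdVec_le {n : ℕ} {F : Type*} [SeminormedAddCommGroup F] [NormedSpace ℝ F]
    (T : Euc n →L[ℝ] F) (i : Fin n) : ‖T (stdVec n i)‖ ≤ ‖T‖ :=
  T.unit_le_opNorm _ (by simp [stdVec])

namespace AlternatingMap

section Module

variable {R M N ι : Type*} [CommSemiring R] [AddCommMonoid M] [Module R M]
  [AddCommMonoid N] [Module R N] (f : M [⋀^ι]→ₗ[R] N)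

theorem map_eq_zero_of_apply_eq_smul [DecidableEq ι] {v : ι → M} {i j : ι} (hij : i ≠ j)
    {u : M} {α β : R} (hi : v i = α • u) (hj : v j = β • u) : f v = 0 := by
  have hv : v = update (update v i (α • u)) j (β • u) := by
    rw [← hi, ← hj, update_eq_self, update_eq_self]
  rw [hv, f.map_update_smul, update_comm hij, f.map_update_smul, update_comm hij.symm,
    f.map_eq_zero_of_eq _ (i := i) (j := j) (by simp [update_of_ne hij]) hij, smul_zero, smul_zero]

/-- Only the terms of the multilinear expansion with at most one factor `p i • u` survive. -/
theorem map_add_smul_eq_add_sum_update [DecidableEq ι] [Fintype ι] (a : ι → M) (p : ι → R)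
    (u : M) : f (fun i => a i + p i • u) = f a + ∑ i, p i • f (update a i u) := by
  have hsplit : (fun i => a i + p i • u) = (fun i => p i • u) + a := funext fun i => add_comm _ _
  have hsmall : insert ∅ (Finset.univ.map ⟨singleton, Finset.singleton_injective⟩) ⊆
      (Finset.univ : Finset (Finset ι)) := Finset.subset_univ _
  rw [hsplit, f.map_add_univ, ← Finset.sum_subset hsmall, Finset.sum_insert (by simp),
    Finset.sum_map]
  · simp only [Embedding.coeFn_mk, Finset.piecewise_empty, Finset.piecewise_singleton,
      f.map_update_smul]
  · intro s _ hs
    simp only [Finset.mem_insert, Finset.mem_map, Finset.mem_univ, true_and, not_or,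
      not_exists] at hs
    obtain ⟨i, rfl⟩ | ⟨i, hi, j, hj, hij⟩ :=
      (Finset.nonempty_iff_ne_empty.2 hs.1).exists_eq_singleton_or_nontrivial
    · exact absurd rfl (hs.2 i)
    · exact f.map_eq_zero_of_apply_eq_smul hij (Finset.piecewise_eq_of_mem _ _ _ hi)
        (Finset.piecewise_eq_of_mem _ _ _ hj)

end Module

variable {E ι : Type*} [NormedAddCommGroup E] [InnerProductSpace ℝ E]

theorem abs_le_one_of_orthonormal [Nonempty ι] {f : E [⋀^ι]→ₗ[ℝ] ℝ}
    (hf : ∀ w, Orthonormal ℝ w → f w ≤ 1) {w : ι → E} (hw : Orthonormal ℝ w) : |f w| ≤ 1 := by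
  classical
  obtain ⟨i⟩ := ‹Nonempty ι›
  have hflip : Orthonormal ℝ (update w i (-w i)) :=
    hw.orthonormal_of_forall_eq_or_eq_neg fun j => by
      rcases eq_or_ne j i with rfl | hj <;> simp [update_of_ne, *]
  have hneg := hf _ hflip
  rw [f.map_update_neg, update_eq_self] at hneg
  exact abs_le.2 ⟨by linarith, hf w hw⟩

variable {n : ℕ}

/-- Hadamard's inequality, via the Gram–Schmidt basis of `v`, in which `v` is triangular. -/
theorem abs_le_prod_norm_of_finrank_eq [FiniteDimensional ℝ E] (h : Module.finrank ℝ E = n)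
    (f : E [⋀^Fin n]→ₗ[ℝ] ℝ) (hf : ∀ b : OrthonormalBasis (Fin n) ℝ E, |f b| ≤ 1)
    (v : Fin n → E) : |f v| ≤ ∏ i, ‖v i‖ := by
  set b := InnerProductSpace.gramSchmidtOrthonormalBasis (h.trans (Fintype.card_fin n).symm) v
  have hdet : f v = f b * ∏ i, inner ℝ (b i) (v i) := by
    conv_lhs => rw [f.eq_smul_basis_det b.toBasis]
    rw [smul_apply, smul_eq_mul, b.coe_toBasis, InnerProductSpace.gramSchmidtOrthonormalBasis_det]
  calc |f v| = |f b| * ∏ i, |inner ℝ (b i) (v i)| := by rw [hdet, abs_mul, Finset.abs_prod]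
    _ ≤ 1 * ∏ i, ‖v i‖ := by
      gcongr with i
      · exact hf b
      · simpa [b.orthonormal.1 i] using abs_real_inner_le_norm (b i) (v i)
    _ = ∏ i, ‖v i‖ := one_mul _

theorem abs_le_prod_norm (f : E [⋀^Fin n]→ₗ[ℝ] ℝ) (hf : ∀ w, Orthonormal ℝ w → |f w| ≤ 1)
    (v : Fin n → E) : |f v| ≤ ∏ i, ‖v i‖ := by
  by_cases hv : LinearIndependent ℝ v
  · set W := Submodule.span ℝ (Set.range v)
    have : FiniteDimensional ℝ W := .span_of_finite ℝ (Set.finite_range v)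
    let v' : Fin n → W := fun i => ⟨v i, Submodule.subset_span (Set.mem_range_self i)⟩
    refine (f.compLinearMap W.subtype).abs_le_prod_norm_of_finrank_eq
      ((finrank_span_eq_card hv).trans (Fintype.card_fin n)) (fun b => ?_) v'
    exact hf _ (b.orthonormal.comp_linearIsometry W.subtypeₗᵢ)
  · rw [f.map_linearDependent v hv, abs_zero]
    exact Finset.prod_nonneg fun i _ => norm_nonneg _

theorem abs_sum_map_update_le (f : E [⋀^Fin n]→ₗ[ℝ] ℝ) (hf : ∀ w, Orthonormal ℝ w → f w ≤ 1)
    {a x : Fin n → E} {A B : ℝ} (ha : ∀ j, ‖a j‖ ≤ A) (hx : ∀ i, ‖x i‖ ≤ B) :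
    |∑ i, f (update a i (x i))| ≤ n * B * A ^ (n - 1) := by
  have hterm (i : Fin n) : |f (update a i (x i))| ≤ B * A ^ (n - 1) := by
    have : Nonempty (Fin n) := ⟨i⟩
    have hA : 0 ≤ A := (norm_nonneg _).trans (ha i)
    calc |f (update a i (x i))| ≤ ∏ j, ‖update a i (x i) j‖ :=
          f.abs_le_prod_norm (fun w hw => abs_le_one_of_orthonormal hf hw) _
      _ ≤ ‖x i‖ * A ^ (n - 1) := by simpa using prod_norm_update_le ha i (x i)
      _ ≤ B * A ^ (n - 1) := by gcongr; exact hx i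
  calc |∑ i, f (update a i (x i))| ≤ ∑ i, |f (update a i (x i))| := Finset.abs_sum_le_sum_abs _ _
    _ ≤ ∑ _i : Fin n, B * A ^ (n - 1) := Finset.sum_le_sum fun i _ => hterm i
    _ = n * B * A ^ (n - 1) := by simp [mul_assoc]

end AlternatingMap

theorem alternating_rank_one_perturbation_estimate_general
    (m n : ℕ)
    (ω : AlternatingMap ℝ (Euc m) ℝ (Fin n))
    (hcomass : ∀ v : Fin n → Euc m, Orthonormal ℝ v → ω v ≤ 1)
    (M₀ M₁ : Euc n →L[ℝ] Euc m) (hrank : RankAtMostOne (M₁ - M₀))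
    (lam : ℝ) :
    |ω (fun i => M₁ (stdVec n i)) - ω (fun i => M₀ (stdVec n i))| ≤
      n * ‖M₁ - M₀‖ * ‖(1 - lam) • M₀ + lam • M₁‖ ^ (n - 1) := by
  obtain ⟨u, hu⟩ := hrank
  choose c hc using fun i => hu (stdVec n i)
  set M := (1 - lam) • M₀ + lam • M₁
  set a : Fin n → Euc m := fun i => M (stdVec n i)
  have hexpand (t : ℝ) : ω (fun i => (M + t • (M₁ - M₀)) (stdVec n i)) =
      ω a + ∑ i, (t * c i) • ω (update a i u) := by
    simp_rw [add_apply, smul_apply, hc, smul_smul]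
    exact ω.map_add_smul_eq_add_sum_update a _ u
  have h₁ := hexpand (1 - lam)
  have h₀ := hexpand (-lam)
  rw [show M + (1 - lam) • (M₁ - M₀) = M₁ by module] at h₁
  rw [show M + (-lam) • (M₁ - M₀) = M₀ by module] at h₀
  have hdiff : ω (fun i => M₁ (stdVec n i)) - ω (fun i => M₀ (stdVec n i)) =
      ∑ i, ω (update a i ((M₁ - M₀) (stdVec n i))) := by
    rw [h₁, h₀, add_sub_add_left_eq_sub, ← Finset.sum_sub_distrib]
    refine Finset.sum_congr rfl fun i _ => ?_
    rw [hc i, ω.map_update_smul, ← sub_smul]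
    ring_nf
  rw [hdiff]
  exact ω.abs_sum_map_update_le hcomass (fun j => norm_apply_stdVec_le M j)
    (fun i => norm_apply_stdVec_le (M₁ - M₀) i)

/-- A mean-value-type estimate for an alternating form of comass at most one along a
rank-one perturbation. -/
theorem alternating_rank_one_perturbation_estimate
    (m n : ℕ) (hn : 2 ≤ n)
    (ω : AlternatingMap ℝ (Euc m) ℝ (Fin n))
    (hcomass : ∀ v : Fin n → Euc m, Orthonormal ℝ v → ω v ≤ 1)
    (M₀ M₁ : Euc n →L[ℝ] Euc m) (hrank : RankAtMostOne (M₁ - M₀))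
    (lam : ℝ) (hlam0 : 0 ≤ lam) (hlam1 : lam ≤ 1) :
    |ω (fun i => M₁ (stdVec n i)) - ω (fun i => M₀ (stdVec n i))| ≤
      n * ‖M₁ - M₀‖ * ‖(1 - lam) • M₀ + lam • M₁‖ ^ (n - 1) :=
  alternating_rank_one_perturbation_estimate_general m n ω hcomass M₀ M₁ hrank lam
end
end
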